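/- arXiv:2410.01429 — 3 statements merged into one kernel-verified Lean document; each statement's English description precedes it below -/
import Mathlib

section
/- Under the stated assumptions, let β ≥ 0 be a real number and let x ∈ U be a point such that ∇b(Φ(t,x)) ≠ 0 for all t ≥ 0. Then the function t ↦ ‖∇b(Φ(t,x))‖^β is differentiable on [0,∞) and its derivative at each t satisfies d/dt ‖∇b(Φ(t,x))‖^β ≤ βC · ‖∇b(Φ(t,x))‖^β − 2β · ‖∇b(Φ(t,x))‖^{β+2}. (This is the key pointwise estimate, equation (2.2) of the paper's proof of Theorem 1.4, in the Euclidean-domain setting.) -/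
open MeasureTheory Real Set

/-- `(toDual ℝ E).symm` as a genuine `ℝ`-continuous-linear map. -/
noncomputable def gradCLM (n : ℕ) :
    (EuclideanSpace ℝ (Fin n) →L[ℝ] ℝ) →L[ℝ] EuclideanSpace ℝ (Fin n) where
  toFun := fun ℓ => (InnerProductSpace.toDual ℝ _).symm ℓ
  map_add' := fun a b => by simp
  map_smul' := fun c a => by simp
  cont := (InnerProductSpace.toDual ℝ _).symm.continuous

lemma gradCLM_inner {n : ℕ} (ℓ : EuclideanSpace ℝ (Fin n) →L[ℝ] ℝ)
    (v : EuclideanSpace ℝ (Fin n)) :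
    (inner ℝ (gradCLM n ℓ) v : ℝ) = ℓ v :=
  InnerProductSpace.toDual_symm_apply

lemma gradient_eq_gradCLM {n : ℕ} (b : EuclideanSpace ℝ (Fin n) → ℝ) :
    gradient b = fun y => gradCLM n (fderiv ℝ b y) := rfl

set_option maxHeartbeats 1000000 in
theorem stmt_2 {n : ℕ} (hn : 3 ≤ n)
    (U : Set (EuclideanSpace ℝ (Fin n))) (hU : IsOpen U)
    (b : EuclideanSpace ℝ (Fin n) → ℝ)
    (hb_smooth : ContDiffOn ℝ (⊤ : ℕ∞) b U)
    (C : ℝ) (hC : 0 ≤ C)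
    (hHess : ∀ x ∈ U, ∀ v : EuclideanSpace ℝ (Fin n),
      iteratedFDeriv ℝ 2 (fun y => b y ^ 2) x ![v, v] ≤ C * ‖v‖ ^ 2)
    (Φ : ℝ → EuclideanSpace ℝ (Fin n) → EuclideanSpace ℝ (Fin n))
    (hΦ0 : ∀ x ∈ U, Φ 0 x = x)
    (hΦU : ∀ t ≥ (0:ℝ), ∀ x ∈ U, Φ t x ∈ U)
    (hΦderiv : ∀ x ∈ U, ∀ t ∈ Ici (0:ℝ),
      HasDerivWithinAt (fun s => Φ s x)
        (gradient (fun y => b y ^ 2) (Φ t x)) (Ici (0:ℝ)) t)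
    (β : ℝ) (hβ : 0 ≤ β)
    (x : EuclideanSpace ℝ (Fin n)) (hx : x ∈ U)
    (hgrad_ne : ∀ t ≥ (0:ℝ), gradient b (Φ t x) ≠ 0) :
    ∀ t ∈ Ici (0:ℝ), ∃ d : ℝ,
      HasDerivWithinAt (fun s => ‖gradient b (Φ s x)‖ ^ β) d (Ici (0:ℝ)) t ∧
      d ≤ β * C * ‖gradient b (Φ t x)‖ ^ β
          - 2 * β * ‖gradient b (Φ t x)‖ ^ (β + 2) := by
  intro t ht
  have hb_diff : ∀ y ∈ U, DifferentiableAt ℝ b y := fun y hy =>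
    (hb_smooth.contDiffAt (hU.mem_nhds hy)).differentiableAt (by simp)
  set z := Φ t x with hzdef
  have hzU : z ∈ U := hΦU t ht x hx
  have hbz : ContDiffAt ℝ (⊤ : ℕ∞) b z := hb_smooth.contDiffAt (hU.mem_nhds hzU)
  have hb1 : DifferentiableAt ℝ b z := hbz.differentiableAt (by simp)
  have hDb : DifferentiableAt ℝ (fderiv ℝ b) z :=
    (hbz.fderiv_right (m := 1) (WithTop.coe_le_coe.mpr le_top)).differentiableAt one_ne_zero
  set Db := fderiv ℝ b z with hDbdef
  set f'' := fderiv ℝ (fderiv ℝ b) z with hf''def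
  set g := gradient b z with hgdef
  have hgne : g ≠ 0 := hgrad_ne t ht
  have hrpos : (0:ℝ) < ‖g‖ := norm_pos_iff.mpr hgne
  have hinner : ∀ v, (inner ℝ g v : ℝ) = Db v := fun v => by
    rw [hgdef, gradient_eq_gradCLM]; exact gradCLM_inner _ v
  -- derivative of b ^ 2 on U
  have hbb : ∀ y ∈ U, HasFDerivAt (fun w => b w ^ 2) ((2 * b y) • fderiv ℝ b y) y := by
    intro y hy
    have h := (hb_diff y hy).hasFDerivAt
    have h2 := h.mul h
    rw [show (fun w => b w ^ 2) = b * b from funext fun w => by simp [pow_two]]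
    rw [two_mul, add_smul]; exact h2
  -- second derivative of b ^ 2 at z
  have hEv : fderiv ℝ (fun w => b w ^ 2) =ᶠ[nhds z] fun y => (2 * b y) • fderiv ℝ b y := by
    filter_upwards [hU.mem_nhds hzU] with y hy
    exact (hbb y hy).fderiv
  have hc : HasFDerivAt (fun y => 2 * b y) ((2:ℝ) • Db) z := hb1.hasFDerivAt.const_mul 2
  have hF : HasFDerivAt (fun y => (2 * b y) • fderiv ℝ b y)
      ((2 * b z) • f'' + ((2:ℝ) • Db).smulRight Db) z := hc.smul hDb.hasFDerivAt
  have hD2 : HasFDerivAt (fderiv ℝ (fun w => b w ^ 2))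
      ((2 * b z) • f'' + ((2:ℝ) • Db).smulRight Db) z :=
    hF.congr_of_eventuallyEq hEv
  have hDbg : Db g = ‖g‖ ^ 2 := by
    rw [← hinner g, real_inner_self_eq_norm_sq]
  -- the Hessian bound specialized to v = g
  have hkey : 2 * b z * (f'' g g) ≤ C * ‖g‖ ^ 2 - 2 * ‖g‖ ^ 4 := by
    have h := hHess z hzU g
    rw [iteratedFDeriv_two_apply, hD2.fderiv] at h
    simp only [Matrix.cons_val_zero, Matrix.cons_val_one, Matrix.head_cons,
      ContinuousLinearMap.add_apply, ContinuousLinearMap.smul_apply,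
      ContinuousLinearMap.smulRight_apply, smul_eq_mul, hDbg] at h
    nlinarith [h]
  -- gradient of b ^ 2 at z
  have hgrad2 : gradient (fun y => b y ^ 2) z = (2 * b z) • g := by
    show gradCLM n (fderiv ℝ (fun w => b w ^ 2) z) = (2 * b z) • g
    rw [(hbb z hzU).fderiv]
    show gradCLM n ((2 * b z) • fderiv ℝ b z) = (2 * b z) • gradCLM n (fderiv ℝ b z)
    exact _root_.map_smul (gradCLM n) _ _
  -- derivative of the curve s ↦ gradient b (Φ s x)
  have hG : HasFDerivAt (gradient b) ((gradCLM n).comp f'') z := by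
    rw [gradient_eq_gradCLM]
    exact ((gradCLM n).hasFDerivAt).comp z hDb.hasFDerivAt
  have hγ : HasDerivWithinAt (fun s => gradient b (Φ s x))
      (((gradCLM n).comp f'') (gradient (fun y => b y ^ 2) z)) (Ici (0:ℝ)) t :=
    by have := hG.comp_hasDerivWithinAt t (hΦderiv x hx t ht); exact this
  set γ' := ((gradCLM n).comp f'') (gradient (fun y => b y ^ 2) z) with hγ'def
  have hγ'inner : (inner ℝ γ' g : ℝ) = 2 * b z * (f'' g g) := by
    rw [hγ'def, hgrad2, ContinuousLinearMap.comp_apply, _root_.map_smul,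
      _root_.map_smul, real_inner_smul_left, gradCLM_inner]
  -- derivative of s ↦ ‖gradient b (Φ s x)‖ ^ 2
  have hq : HasDerivWithinAt (fun s => (‖gradient b (Φ s x)‖ ^ 2 : ℝ))
      ((inner ℝ g γ' : ℝ) + (inner ℝ γ' g : ℝ)) (Ici (0:ℝ)) t := by
    have h := hγ.inner ℝ hγ
    exact h.congr (fun s _ => (real_inner_self_eq_norm_sq _).symm)
      (real_inner_self_eq_norm_sq _).symm
  have hQne : (‖gradient b (Φ t x)‖ ^ 2 : ℝ) ≠ 0 := by
    rw [← hzdef]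
    positivity
  have hh := hq.rpow_const (p := β / 2) (Or.inl hQne)
  refine ⟨((inner ℝ g γ' : ℝ) + (inner ℝ γ' g : ℝ)) * (β / 2) * (‖gradient b (Φ t x)‖ ^ 2) ^ (β / 2 - 1),
    ?_, ?_⟩
  · refine hh.congr (fun s _ => ?_) ?_ <;>
    · rw [← Real.rpow_natCast ‖gradient b (Φ _ x)‖ 2, ← Real.rpow_mul (norm_nonneg _)]
      congr 1
      push_cast
      ring
  · rw [← hzdef]
    have hq' : (inner ℝ g γ' : ℝ) + (inner ℝ γ' g : ℝ) ≤ 2 * C * ‖g‖ ^ 2 - 4 * ‖g‖ ^ 4 := by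
      have hcomm := real_inner_comm g γ'
      linarith [hγ'inner, hkey, hcomm]
    have hmnn : (0:ℝ) ≤ (β / 2) * (‖g‖ ^ 2) ^ (β / 2 - 1) := by positivity
    set r := ‖g‖ with hrdef
    have e1 : ((r ^ 2 : ℝ)) ^ (β / 2 - 1) = r ^ (β - 2) := by
      rw [← Real.rpow_natCast r 2, ← Real.rpow_mul hrpos.le]
      congr 1
      push_cast
      ring
    have e2 : (r ^ 2 : ℝ) * r ^ (β - 2) = r ^ β := by
      rw [← Real.rpow_natCast r 2, ← Real.rpow_add hrpos]
      congr 1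
      push_cast
      ring
    have e3 : (r ^ 4 : ℝ) * r ^ (β - 2) = r ^ (β + 2) := by
      rw [← Real.rpow_natCast r 4, ← Real.rpow_add hrpos]
      congr 1
      push_cast; ring
    calc ((inner ℝ g γ' : ℝ) + (inner ℝ γ' g : ℝ)) * (β / 2) * (r ^ 2) ^ (β / 2 - 1)
        = ((inner ℝ g γ' : ℝ) + (inner ℝ γ' g : ℝ)) * ((β / 2) * (r ^ 2) ^ (β / 2 - 1)) := by ring
      _ ≤ (2 * C * r ^ 2 - 4 * r ^ 4) * ((β / 2) * (r ^ 2) ^ (β / 2 - 1)) :=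
          mul_le_mul_of_nonneg_right hq' hmnn
      _ = β * C * ((r ^ 2 : ℝ) * (r ^ 2) ^ (β / 2 - 1))
            - 2 * β * ((r ^ 4 : ℝ) * (r ^ 2) ^ (β / 2 - 1)) := by ring
      _ = β * C * r ^ β - 2 * β * r ^ (β + 2) := by rw [e1, e2, e3]
end

section
/- Let U be an open subset of E and let b : U → ℝ be twice continuously differentiable. Then for every x ∈ U, ⟨∇(‖∇b‖²)(x), ∇(b²)(x)⟩ = 2 · D²(b²)(x)(∇b(x), ∇b(x)) − 4‖∇b(x)‖⁴. (This is the paper's Lemma 2.2 in the Euclidean setting.) -/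
/-! Both sides equal `4 b(x) D²b(x)(∇b(x), ∇b(x))`: the gradient of `b²` is `2 b ∇b`, the derivative
of `‖∇b‖²` is `2 D²b(·, ∇b)`, and `D²(b²) = 2 b D²b + 2 Db ⊗ Db`, whose second term produces the
`4 ‖∇b‖⁴` that cancels. -/

open Filter InnerProductSpace Topology
open scoped Gradient RealInnerProductSpace

section SecondDerivative

variable {𝕜 E : Type*} [NontriviallyNormedField 𝕜] [NormedAddCommGroup E] [NormedSpace 𝕜 E]
  {f : E → 𝕜} {f' : E →L[𝕜] 𝕜} {x : E}

theorem HasFDerivAt.fun_sq (h : HasFDerivAt f f' x) :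
    HasFDerivAt (fun y => f y ^ 2) ((2 * f x) • f') x := by
  simpa [nsmul_eq_mul] using h.pow 2

theorem iteratedFDeriv_two_fun_sq_apply (hf : ∀ᶠ y in 𝓝 x, DifferentiableAt 𝕜 f y)
    (hf' : DifferentiableAt 𝕜 (fderiv 𝕜 f) x) (v w : E) :
    iteratedFDeriv 𝕜 2 (fun y => f y ^ 2) x ![v, w]
      = 2 * f x * fderiv 𝕜 (fderiv 𝕜 f) x v w + 2 * fderiv 𝕜 f x v * fderiv 𝕜 f x w := by
  have hsq : fderiv 𝕜 (fun y => f y ^ 2) =ᶠ[𝓝 x] fun y => (2 * f y) • fderiv 𝕜 f y :=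
    hf.mono fun y hy => hy.hasFDerivAt.fun_sq.fderiv
  rw [iteratedFDeriv_two_apply, hsq.fderiv_eq,
    ((hf.self_of_nhds.hasFDerivAt.const_mul 2).fun_smul hf'.hasFDerivAt).fderiv]
  simp

end SecondDerivative

section Gradient

variable {E : Type*} [NormedAddCommGroup E] [InnerProductSpace ℝ E] [CompleteSpace E]
  {f : E → ℝ} {x : E}

theorem gradient_fun_sq (h : DifferentiableAt ℝ f x) :
    ∇ (fun y => f y ^ 2) x = (2 * f x) • ∇ f x := by
  refine ext_inner_right ℝ fun w => ?_
  rw [inner_gradient_left, h.hasFDerivAt.fun_sq.fderiv, real_inner_smul_left, inner_gradient_left]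
  rfl

theorem hasFDerivAt_gradient (h : DifferentiableAt ℝ (fderiv ℝ f) x) :
    HasFDerivAt (∇ f)
      ((toDual ℝ E).symm.toContinuousLinearEquiv.toContinuousLinearMap ∘L
        fderiv ℝ (fderiv ℝ f) x) x :=
  (toDual ℝ E).symm.toContinuousLinearEquiv.hasFDerivAt.comp x h.hasFDerivAt

theorem fderiv_norm_sq_gradient_apply (h : DifferentiableAt ℝ (fderiv ℝ f) x) (v : E) :
    fderiv ℝ (fun y => ‖∇ f y‖ ^ 2) x v = 2 * fderiv ℝ (fderiv ℝ f) x v (∇ f x) := by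
  rw [(hasFDerivAt_gradient h).norm_sq.fderiv]
  simp only [smul_apply, ContinuousLinearMap.comp_apply, coe_innerSL_apply,
    ContinuousLinearEquiv.coe_coe, nsmul_eq_mul, Nat.cast_ofNat]
  rw [real_inner_comm]
  exact congrArg (2 * ·) toDual_symm_apply

theorem inner_gradient_norm_sq_gradient_gradient_sq
    (hf : ∀ᶠ y in 𝓝 x, DifferentiableAt ℝ f y) (hf' : DifferentiableAt ℝ (fderiv ℝ f) x) :
    ⟪∇ (fun y => ‖∇ f y‖ ^ 2) x, ∇ (fun y => f y ^ 2) x⟫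
      = 2 * iteratedFDeriv ℝ 2 (fun y => f y ^ 2) x ![∇ f x, ∇ f x] - 4 * ‖∇ f x‖ ^ 4 := by
  rw [inner_gradient_left, gradient_fun_sq hf.self_of_nhds, map_smul,
    fderiv_norm_sq_gradient_apply hf', iteratedFDeriv_two_fun_sq_apply hf hf',
    ← inner_gradient_left, real_inner_self_eq_norm_sq]
  simp only [smul_eq_mul]
  ring

end Gradient

theorem stmt_3_general {n : ℕ}
    (U : Set (EuclideanSpace ℝ (Fin n))) (hU : IsOpen U)
    (b : EuclideanSpace ℝ (Fin n) → ℝ)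
    (hb : ContDiffOn ℝ 2 b U) :
    ∀ x ∈ U,
      ⟪gradient (fun y => ‖gradient b y‖ ^ 2) x, gradient (fun y => b y ^ 2) x⟫
        = 2 * iteratedFDeriv ℝ 2 (fun y => b y ^ 2) x ![gradient b x, gradient b x]
          - 4 * ‖gradient b x‖ ^ 4 := by
  intro x hx
  have hb₂ : ContDiffAt ℝ 2 b x := hb.contDiffAt (hU.mem_nhds hx)
  exact inner_gradient_norm_sq_gradient_gradient_sq
    ((hb₂.eventually (by simp)).mono fun y hy => hy.differentiableAt two_ne_zero)
    ((hb₂.fderiv_right (m := 1) le_rfl).differentiableAt one_ne_zero)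

theorem stmt_3 {n : ℕ} (hn : 3 ≤ n)
    (U : Set (EuclideanSpace ℝ (Fin n))) (hU : IsOpen U)
    (b : EuclideanSpace ℝ (Fin n) → ℝ)
    (hb : ContDiffOn ℝ 2 b U) :
    ∀ x ∈ U,
      ⟪gradient (fun y => ‖gradient b y‖ ^ 2) x, gradient (fun y => b y ^ 2) x⟫
        = 2 * iteratedFDeriv ℝ 2 (fun y => b y ^ 2) x ![gradient b x, gradient b x]
          - 4 * ‖gradient b x‖ ^ 4 :=
  stmt_3_general U hU b hb
end

section
/- Assume in addition that F'(r) > 0 for all r ∈ I and that equation (hF_eqn) holds at every r ∈ I, and fix r₀ ∈ I. Then for every r ∈ I, h(F(r))^{−n/2}·ḣ(F(r)) = h(F(r₀))^{−n/2}·ḣ(F(r₀)) · exp( −∫_{r₀}^r ( (n−1)/√(F(s)) + F''(s)/F'(s) ) ds ). (This is a rigorous form of the paper's integrated formula (4.7) for ḣ, obtained by integrating equation (4.5).) -/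
/-!
Put `g := h(F)^(-n/2) · ḣ(F)` and `k := (n-1)/√F + F''/F'`. By the chain rule
`g' = h(F)^(-n/2) · (-(n/2) ḣ(F)² F'/h(F) + ḧ(F) F')`, and dividing (hF_eqn) by `h(F) F'` shows
that this equals `-k g`. Hence `g · exp (∫_{r₀}^r k)` has zero derivative on the interval `I`,
so it is constant.
-/

open Real Set

theorem eq_mul_exp_neg_integral_of_hasDerivAt {I : Set ℝ} (hI_open : IsOpen I)
    (hI_conn : Convex ℝ I) {g k : ℝ → ℝ} (hk : ContinuousOn k I)
    (hg : ∀ r ∈ I, HasDerivAt g (-k r * g r) r) {r₀ r : ℝ} (hr₀ : r₀ ∈ I) (hr : r ∈ I) :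
    g r = g r₀ * exp (-∫ s in r₀..r, k s) := by
  set G : ℝ → ℝ := fun r => ∫ s in r₀..r, k s
  have hG : ∀ r ∈ I, HasDerivAt G (k r) r := fun r hr =>
    intervalIntegral.integral_hasDerivAt_right
      ((hk.mono (hI_conn.ordConnected.uIcc_subset hr₀ hr)).intervalIntegrable)
      ⟨I, hI_open.mem_nhds hr, hk.aestronglyMeasurable hI_open.measurableSet⟩
      (hk.continuousAt (hI_open.mem_nhds hr))
  have hφ : ∀ r ∈ I, HasDerivAt (fun r => g r * exp (G r)) 0 r := fun r hr =>
    ((hg r hr).mul (hG r hr).exp).congr_deriv (by ring)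
  have hconst : g r * exp (G r) = g r₀ * exp (G r₀) :=
    hI_open.is_const_of_deriv_eq_zero hI_conn.isPreconnected
      (fun x hx => (hφ x hx).differentiableAt.differentiableWithinAt)
      (fun x hx => (hφ x hx).deriv) hr hr₀
  rw [show G r₀ = 0 from intervalIntegral.integral_same, exp_zero, mul_one] at hconst
  rw [← hconst, mul_assoc, ← exp_add, add_neg_cancel, exp_zero, mul_one]

theorem hasDerivAt_rpow_comp_mul_deriv_comp {h F : ℝ → ℝ} {c r : ℝ}
    (hF : DifferentiableAt ℝ F r) (hh : DifferentiableAt ℝ h (F r))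
    (hh' : DifferentiableAt ℝ (deriv h) (F r)) (hpos : 0 < h (F r)) :
    HasDerivAt (fun x => h (F x) ^ c * deriv h (F x))
      (h (F r) ^ c * ((c * deriv h (F r) ^ 2 / h (F r) + deriv (deriv h) (F r)) * deriv F r))
      r := by
  have hpow := (hasDerivAt_rpow_const (p := c) (Or.inl hpos.ne')).comp r
    (hh.hasDerivAt.comp r hF.hasDerivAt)
  refine (hpow.mul (hh'.hasDerivAt.comp r hF.hasDerivAt)).congr_deriv ?_
  rw [rpow_sub_one hpos.ne']
  dsimp only [Function.comp_apply]
  field_simp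

theorem eq_neg_mul_of_hF_eqn {n H D D₂ P Q S : ℝ} (hH : H ≠ 0) (hP : P ≠ 0)
    (heqn : -(n / 2) * (D * P) ^ 2 + H * (D₂ * P ^ 2 + ((n - 1) / S) * D * P + D * Q) = 0) :
    (-n / 2 * D ^ 2 / H + D₂) * P = -((n - 1) / S + Q / P) * D := by
  field_simp
  linear_combination 2 * heqn

theorem stmt_12_general {n : ℕ}
    (I : Set ℝ) (hI_open : IsOpen I) (hI_conn : Convex ℝ I)
    (J : Set ℝ) (hJ_open : IsOpen J)
    (F : ℝ → ℝ) (hF : ContDiffOn ℝ 2 F I) (hF_pos : ∀ r ∈ I, 0 < F r)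
    (hFJ : ∀ r ∈ I, F r ∈ J)
    (h : ℝ → ℝ) (hh : ContDiffOn ℝ 2 h J) (hh_pos : ∀ y ∈ J, 0 < h y)
    (hF' : ∀ r ∈ I, 0 < deriv F r)
    (heqn : ∀ r ∈ I,
      -((n : ℝ) / 2) * (deriv h (F r) * deriv F r) ^ 2
        + h (F r) * (deriv (deriv h) (F r) * (deriv F r) ^ 2
          + (((n : ℝ) - 1) / Real.sqrt (F r)) * deriv h (F r) * deriv F r
          + deriv h (F r) * deriv (deriv F) r) = 0)
    (r₀ : ℝ) (hr₀ : r₀ ∈ I) :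
    ∀ r ∈ I,
      h (F r) ^ (-(n : ℝ) / 2) * deriv h (F r)
        = h (F r₀) ^ (-(n : ℝ) / 2) * deriv h (F r₀)
          * Real.exp (-∫ s in r₀..r,
              (((n : ℝ) - 1) / Real.sqrt (F s) + deriv (deriv F) s / deriv F s)) := by
  have hdF : ContDiffOn ℝ 1 (deriv F) I := hF.deriv_of_isOpen hI_open (by norm_num)
  have hdh : ContDiffOn ℝ 1 (deriv h) J := hh.deriv_of_isOpen hJ_open (by norm_num)
  have hk : ContinuousOn (fun s => ((n : ℝ) - 1) / √(F s) + deriv (deriv F) s / deriv F s) I :=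
    (continuousOn_const.div (continuous_sqrt.comp_continuousOn hF.continuousOn)
        fun s hs => (sqrt_pos.2 (hF_pos s hs)).ne').add
      ((hdF.continuousOn_deriv_of_isOpen hI_open le_rfl).div hdF.continuousOn
        fun s hs => (hF' s hs).ne')
  intro r hr
  refine eq_mul_exp_neg_integral_of_hasDerivAt hI_open hI_conn hk
    (g := fun x => h (F x) ^ (-(n : ℝ) / 2) * deriv h (F x)) (fun x hx => ?_) hr₀ hr
  have hFJx : J ∈ nhds (F x) := hJ_open.mem_nhds (hFJ x hx)
  have hpos := hh_pos _ (hFJ x hx)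
  convert hasDerivAt_rpow_comp_mul_deriv_comp (c := -(n : ℝ) / 2)
    ((hF.differentiableOn (by norm_num)).differentiableAt (hI_open.mem_nhds hx))
    ((hh.differentiableOn (by norm_num)).differentiableAt hFJx)
    ((hdh.differentiableOn one_ne_zero).differentiableAt hFJx) hpos using 1
  rw [eq_neg_mul_of_hF_eqn hpos.ne' (hF' x hx).ne' (heqn x hx)]
  ring

theorem stmt_12 {n : ℕ} (hn : 3 ≤ n)
    (I : Set ℝ) (hI_open : IsOpen I) (hI_conn : Convex ℝ I) (hI_pos : I ⊆ Ioi 0)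
    (J : Set ℝ) (hJ_open : IsOpen J) (hJ_conn : Convex ℝ J) (hJ_pos : J ⊆ Ioi 0)
    (F : ℝ → ℝ) (hF : ContDiffOn ℝ 2 F I) (hF_pos : ∀ r ∈ I, 0 < F r)
    (hFJ : ∀ r ∈ I, F r ∈ J)
    (h : ℝ → ℝ) (hh : ContDiffOn ℝ 2 h J) (hh_pos : ∀ y ∈ J, 0 < h y)
    (hF' : ∀ r ∈ I, 0 < deriv F r)
    (heqn : ∀ r ∈ I,
      -((n : ℝ) / 2) * (deriv h (F r) * deriv F r) ^ 2
        + h (F r) * (deriv (deriv h) (F r) * (deriv F r) ^ 2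
          + (((n : ℝ) - 1) / Real.sqrt (F r)) * deriv h (F r) * deriv F r
          + deriv h (F r) * deriv (deriv F) r) = 0)
    (r₀ : ℝ) (hr₀ : r₀ ∈ I) :
    ∀ r ∈ I,
      h (F r) ^ (-(n : ℝ) / 2) * deriv h (F r)
        = h (F r₀) ^ (-(n : ℝ) / 2) * deriv h (F r₀)
          * Real.exp (-∫ s in r₀..r,
              (((n : ℝ) - 1) / Real.sqrt (F s) + deriv (deriv F) s / deriv F s)) :=
  stmt_12_general I hI_open hI_conn J hJ_open F hF hF_pos hFJ h hh hh_pos hF' heqn r₀ hr₀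
end
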